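/- Let p be an odd prime, m ≥ 1, k = p^m - 2, and K a field of characteristic p. Define Gz(f,g) = Σ_{i=0}^{⌊(k-1)/2⌋} (-1)^i (f^{(i)} g^{(k-i)} - f^{(k-i)} g^{(i)}), where f^{(i)} denotes the i-th distinguished derivative ∂^i f in the divided power algebra O(1;N) with p^N > k. Then Gz : F_1 ⊗ F_1 → F_{k+2} is vect(1;N)-invariant: for every vector field D = h∂, L_D(Gz(f,g)) = Gz(L_D f, g) + Gz(f, L_D g), where L_D acts on F_a by L_D(f) = h∂f + a f ∂h with a = 1 on the sources and a = k+2 on the target. -/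

import Mathlib

open Finset

/-- Multiplication in the divided power algebra `O(1;N)` truncated at `n = p^N`;
elements are given by their coefficients in the basis `u^{(r)}`, `0 ≤ r < n`,
and `u^{(r)} · u^{(s)} = C(r+s, r) u^{(r+s)}` (zero if `r+s ≥ n`). -/
def dpMul {K : Type*} [Field K] (n : ℕ) (f g : ℕ → K) : ℕ → K :=
  fun t => if t < n then ∑ i ∈ Finset.range (t + 1), ((t.choose i : K) * f i * g (t - i)) else 0

/-- The distinguished derivation `∂` of `O(1;N)`: `∂(u^{(r)}) = u^{(r-1)}`. -/
def dpDer {K : Type*} [Field K] (n : ℕ) (f : ℕ → K) : ℕ → K :=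
  fun r => if r + 1 < n then f (r + 1) else 0

/-- Membership in `O(1;N)`: coefficients vanish in degrees `≥ n`. -/
def dpSupp {K : Type*} [Field K] (n : ℕ) (f : ℕ → K) : Prop := ∀ r, n ≤ r → f r = 0

/-- Berezin-type integral: the coefficient of `u^{(n-1)}`. -/
def dpInt {K : Type*} [Field K] (n : ℕ) (f : ℕ → K) : K := f (n - 1)

/-- Lie derivative along `h∂ ∈ vect(1;N)` acting on the weighted density module
`F_a`: `L_{h∂}(f) = h·∂f + a·f·∂h`. -/
def dpLie {K : Type*} [Field K] (n : ℕ) (a : K) (h f : ℕ → K) : ℕ → K :=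
  dpMul n h (dpDer n f) + a • dpMul n f (dpDer n h)

/-- The analog of the Grozman operator for odd p:
Gz(f,g) = Σ_{i=0}^{⌊(k-1)/2⌋} (-1)^i (f^{(i)} g^{(k-i)} - f^{(k-i)} g^{(i)}). -/
def GzOdd {K : Type*} [Field K] (n k : ℕ) (f g : ℕ → K) : ℕ → K :=
  ∑ i ∈ Finset.range ((k - 1) / 2 + 1),
    ((-1 : K) ^ i) •
      (dpMul n ((dpDer n)^[i] f) ((dpDer n)^[k - i] g)
        - dpMul n ((dpDer n)^[k - i] f) ((dpDer n)^[i] g))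

/-!
Since `k + 2 = p ^ m` vanishes in `K`, the target has weight zero, while on weight one
`L_{h∂} f = ∂(h f)`. For odd `k`, `Gz` is the full alternating sum
`B_k(f, g) = ∑_{i ≤ k} (-1)^i f^{(i)} g^{(k-i)}`, and peeling off an end term gives
`B_k(∂u, v) = u v^{(k+1)} - B_{k+1}(u, v)` and `B_k(u, ∂v) = B_{k+1}(u, v) - u^{(k+1)} v`.
As `C(p^m - 1, i) = (-1)^i` in characteristic `p`, Leibniz's rule identifies
`B_{k+1}(u, v)` with `∂^{k+1}(u v)`, which only sees the product `u v`. So the `B_{k+1}` terms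
cancel in `B_k(∂(h f), g) + B_k(f, ∂(h g))`, leaving `h (f g^{(k+1)} - f^{(k+1)} g)`, which is
also `h ∂B_k(f, g)`.
-/

def dpAltSum {K : Type*} [Field K] (n k : ℕ) (f g : ℕ → K) : ℕ → K :=
  ∑ i ∈ range (k + 1), ((-1 : K) ^ i) • dpMul n ((dpDer n)^[i] f) ((dpDer n)^[k - i] g)

section DividedPowers

variable {K : Type*} [Field K] {n : ℕ}

lemma dpMul_apply_of_lt (f g : ℕ → K) {t : ℕ} (ht : t < n) :
    dpMul n f g t = ∑ i ∈ range (t + 1), (t.choose i : K) * f i * g (t - i) :=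
  if_pos ht

lemma dpSupp_dpMul (f g : ℕ → K) : dpSupp n (dpMul n f g) := fun _ hr => if_neg (by omega)

lemma dpSupp_dpDer (f : ℕ → K) : dpSupp n (dpDer n f) := fun r hr => by
  simp [dpDer, show ¬ r + 1 < n by omega]

lemma dpSupp_iterate_dpDer {f : ℕ → K} (hf : dpSupp n f) : ∀ j, dpSupp n ((dpDer n)^[j] f)
  | 0 => hf
  | j + 1 => by rw [Function.iterate_succ_apply']; exact dpSupp_dpDer _

lemma dpDer_apply_of_dpSupp {f : ℕ → K} (hf : dpSupp n f) (r : ℕ) :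
    dpDer n f r = f (r + 1) := by
  by_cases hr : r + 1 < n
  · simp [dpDer, hr]
  · simp [dpDer, hr, hf (r + 1) (by omega)]

lemma dpDer_smul {M : Type*} [SMulZeroClass M K] (c : M) (f : ℕ → K) :
    dpDer n (c • f) = c • dpDer n f := by
  funext r; simp only [dpDer, Pi.smul_apply]; split <;> simp

lemma dpDer_sum {ι : Type*} (s : Finset ι) (F : ι → ℕ → K) :
    dpDer n (∑ i ∈ s, F i) = ∑ i ∈ s, dpDer n (F i) := by
  funext r; simp only [dpDer, Finset.sum_apply]; split <;> simp

lemma dpMul_sub_right (f x y : ℕ → K) : dpMul n f (x - y) = dpMul n f x - dpMul n f y := by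
  funext t
  simp only [dpMul, Pi.sub_apply]
  split
  · rw [← sum_sub_distrib]; exact sum_congr rfl fun i _ => by ring
  · simp

lemma dpMul_comm (f g : ℕ → K) : dpMul n f g = dpMul n g f := by
  funext t
  simp only [dpMul]
  split
  · rw [← sum_range_reflect]
    refine sum_congr rfl fun i hi => ?_
    have hit : i ≤ t := Nat.lt_succ_iff.1 (mem_range.1 hi)
    rw [Nat.add_sub_cancel, Nat.sub_sub_self hit, Nat.choose_symm hit]
    ring
  · rfl

lemma dpMul_assoc (f g h : ℕ → K) : dpMul n (dpMul n f g) h = dpMul n f (dpMul n g h) := by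
  funext t
  by_cases ht : t < n
  swap
  · simp [dpMul, ht]
  have expand_left : dpMul n (dpMul n f g) h t = ∑ i ∈ range (t + 1), ∑ j ∈ range (i + 1),
      (t.choose i : K) * i.choose j * f j * g (i - j) * h (t - i) := by
    rw [dpMul_apply_of_lt _ _ ht]
    refine sum_congr rfl fun i hi => ?_
    rw [dpMul_apply_of_lt _ _ (by rw [mem_range] at hi; omega), mul_sum, sum_mul]
    exact sum_congr rfl fun j _ => by ring
  have expand_right : dpMul n f (dpMul n g h) t
      = ∑ j ∈ range (t + 1), ∑ l ∈ range (t - j + 1),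
        (t.choose j : K) * (t - j).choose l * f j * g l * h (t - j - l) := by
    rw [dpMul_apply_of_lt _ _ ht]
    refine sum_congr rfl fun j hj => ?_
    rw [dpMul_apply_of_lt _ _ (by omega), mul_sum]
    exact sum_congr rfl fun l _ => by ring
  rw [expand_left, expand_right,
    sum_comm' (t' := range (t + 1)) (s' := fun j => Ico j (t + 1)) (by intro i j; simp; omega)]
  refine sum_congr rfl fun j hj => ?_
  rw [sum_Ico_eq_sum_range, show t + 1 - j = t - j + 1 by rw [mem_range] at hj; omega]
  refine sum_congr rfl fun l _ => ?_
  have hchoose := Nat.choose_mul (n := t) (k := j + l) (s := j) (Nat.le_add_right j l)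
  rw [Nat.add_sub_cancel_left] at hchoose ⊢
  rw [show t - (j + l) = t - j - l by omega]
  exact_mod_cast congrArg (fun c : ℕ => (c : K) * f j * g l * h (t - j - l)) hchoose

lemma dpMul_left_comm (f g h : ℕ → K) :
    dpMul n f (dpMul n g h) = dpMul n g (dpMul n f h) := by
  rw [← dpMul_assoc, dpMul_comm f g, dpMul_assoc]

lemma dpAltSum_succ_left (k : ℕ) (u v : ℕ → K) :
    dpAltSum n (k + 1) u v = dpMul n u ((dpDer n)^[k + 1] v) - dpAltSum n k (dpDer n u) v := by
  simp only [dpAltSum, sum_range_succ' _ (k + 1), pow_succ, mul_neg_one, neg_smul,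
    sum_neg_distrib, Function.iterate_succ_apply, Nat.add_sub_add_right, pow_zero, one_smul,
    Function.iterate_zero_apply, Nat.sub_zero]
  abel

lemma dpAltSum_succ_right (k : ℕ) (u v : ℕ → K) :
    dpAltSum n (k + 1) u v
      = dpAltSum n k u (dpDer n v) + (-1 : K) ^ (k + 1) • dpMul n ((dpDer n)^[k + 1] u) v := by
  rw [dpAltSum, sum_range_succ, Nat.sub_self, Function.iterate_zero_apply, dpAltSum]
  congr 1
  refine sum_congr rfl fun i hi => ?_
  rw [show k + 1 - i = (k - i) + 1 by rw [mem_range] at hi; omega, Function.iterate_succ_apply]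

lemma dpAltSum_dpDer_add_dpAltSum_dpDer {k : ℕ} (hk : Odd k) (u v w z : ℕ → K) :
    dpAltSum n k (dpDer n u) v + dpAltSum n k w (dpDer n z)
      = dpMul n u ((dpDer n)^[k + 1] v) - dpMul n ((dpDer n)^[k + 1] w) z
        + (dpAltSum n (k + 1) w z - dpAltSum n (k + 1) u v) := by
  have hleft := dpAltSum_succ_left (n := n) k u v
  have hright := dpAltSum_succ_right (n := n) k w z
  rw [hk.add_one.neg_one_pow, one_smul] at hright
  linear_combination hleft - hright

lemma sum_range_two_mul_eq_sum_add_reflect {M : Type*} [AddCommMonoid M] (I : ℕ) (F : ℕ → M) :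
    ∑ i ∈ range (2 * I), F i = ∑ i ∈ range I, (F i + F (2 * I - 1 - i)) := by
  rw [two_mul, sum_range_add, sum_add_distrib]
  congr 1
  rw [← sum_range_reflect]
  refine sum_congr rfl fun i hi => ?_
  rw [show I + (I - 1 - i) = I + I - 1 - i by rw [mem_range] at hi; omega]

lemma neg_one_pow_sub_of_odd {R : Type*} [Monoid R] [HasDistribNeg R] {k i : ℕ} (hk : Odd k)
    (hik : i ≤ k) : (-1 : R) ^ (k - i) = -(-1) ^ i := by
  rcases Nat.even_or_odd i with hi | hi
  · rw [(Nat.Odd.sub_even hik hk hi).neg_one_pow, hi.neg_one_pow]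
  · rw [(Nat.Odd.sub_odd hk hi).neg_one_pow, hi.neg_one_pow, neg_neg]

lemma GzOdd_eq_dpAltSum {k : ℕ} (hk : Odd k) (f g : ℕ → K) :
    GzOdd n k f g = dpAltSum n k f g := by
  have hkI : k + 1 = 2 * ((k - 1) / 2 + 1) := by obtain ⟨r, rfl⟩ := hk; omega
  rw [dpAltSum, hkI, sum_range_two_mul_eq_sum_add_reflect, ← hkI, GzOdd]
  refine sum_congr rfl fun i hi => ?_
  have hik : i ≤ k := by rw [mem_range] at hi; omega
  rw [Nat.add_sub_cancel, neg_one_pow_sub_of_odd hk hik, Nat.sub_sub_self hik, smul_sub, neg_smul]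
  abel

section CharP

variable {p : ℕ} [CharP K p]

lemma cast_choose_prime_pow_eq_zero (hp : p.Prime) {N i : ℕ} (h0 : i ≠ 0) (hN : i ≠ p ^ N) :
    ((p ^ N).choose i : K) = 0 :=
  (CharP.cast_eq_zero_iff K p _).2 (hp.dvd_choose_pow h0 hN)

lemma cast_choose_prime_pow_sub_one (hp : p.Prime) {m j : ℕ} (hj : j ≤ p ^ m - 1) :
    ((p ^ m - 1).choose j : K) = (-1) ^ j := by
  induction j with
  | zero => simp
  | succ j ih =>
    have hpascal : (p ^ m - 1).choose j + (p ^ m - 1).choose (j + 1) = (p ^ m).choose (j + 1) := by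
      rw [← Nat.choose_succ_succ', Nat.sub_add_cancel (Nat.one_le_pow _ _ hp.pos)]
    have hzero := cast_choose_prime_pow_eq_zero (K := K) hp (N := m) j.succ_ne_zero (by omega)
    rw [← hpascal, Nat.cast_add, ih (by omega)] at hzero
    linear_combination hzero

lemma sum_choose_prime_pow_mul_eq_zero (hp : p.Prime) {N : ℕ} {f g : ℕ → K}
    (hf : dpSupp (p ^ N) f) (hg : dpSupp (p ^ N) g) :
    ∑ j ∈ range (p ^ N + 1), ((p ^ N).choose j : K) * (f j * g (p ^ N - j)) = 0 := by
  refine sum_eq_zero fun j _ => ?_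
  rcases eq_or_ne j 0 with rfl | h0
  · simp [hg (p ^ N) le_rfl]
  rcases eq_or_ne j (p ^ N) with rfl | hN
  · simp [hf _ le_rfl]
  · simp [cast_choose_prime_pow_eq_zero hp h0 hN]

/-- At the top degree `p ^ N - 1` this needs `C(p ^ N, j) = 0` for `0 < j < p ^ N`. -/
lemma dpDer_dpMul (hp : p.Prime) {N : ℕ} {f g : ℕ → K}
    (hf : dpSupp (p ^ N) f) (hg : dpSupp (p ^ N) g) :
    dpDer (p ^ N) (dpMul (p ^ N) f g)
      = dpMul (p ^ N) (dpDer (p ^ N) f) g + dpMul (p ^ N) f (dpDer (p ^ N) g) := by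
  funext t
  rw [Pi.add_apply]
  by_cases ht : t < p ^ N
  swap
  · simp [dpDer, dpMul, ht, show ¬ t + 1 < p ^ N by omega]
  have hpascal : dpMul (p ^ N) (dpDer (p ^ N) f) g t + dpMul (p ^ N) f (dpDer (p ^ N) g) t
      = ∑ j ∈ range (t + 2), ((t + 1).choose j : K) * (f j * g (t + 1 - j)) := by
    rw [sum_choose_succ_mul (fun a b => f a * g b), dpMul_apply_of_lt _ _ ht,
      dpMul_apply_of_lt _ _ ht, add_comm]
    congr 1 <;> refine sum_congr rfl fun i hi => ?_
    · rw [dpDer_apply_of_dpSupp hg, show t - i + 1 = t + 1 - i by rw [mem_range] at hi; omega]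
      ring
    · rw [dpDer_apply_of_dpSupp hf]
      ring
  rw [hpascal]
  by_cases ht1 : t + 1 < p ^ N
  · rw [dpDer, if_pos ht1, dpMul_apply_of_lt _ _ ht1]
    exact sum_congr rfl fun _ _ => by ring
  · rw [dpDer, if_neg ht1, show t + 2 = p ^ N + 1 by omega, show t + 1 = p ^ N by omega,
      sum_choose_prime_pow_mul_eq_zero hp hf hg]

lemma iterate_dpDer_dpMul (hp : p.Prime) {N : ℕ} {f g : ℕ → K}
    (hf : dpSupp (p ^ N) f) (hg : dpSupp (p ^ N) g) (j : ℕ) :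
    (dpDer (p ^ N))^[j] (dpMul (p ^ N) f g) = ∑ i ∈ range (j + 1),
      j.choose i • dpMul (p ^ N) ((dpDer (p ^ N))^[i] f) ((dpDer (p ^ N))^[j - i] g) := by
  induction j with
  | zero => simp
  | succ j ih =>
    rw [sum_choose_succ_nsmul
        (fun a b => dpMul (p ^ N) ((dpDer (p ^ N))^[a] f) ((dpDer (p ^ N))^[b] g)),
      Function.iterate_succ_apply', ih, dpDer_sum, ← sum_add_distrib]
    refine sum_congr rfl fun i hi => ?_
    rw [dpDer_smul, dpDer_dpMul hp (dpSupp_iterate_dpDer hf i) (dpSupp_iterate_dpDer hg (j - i)),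
      smul_add, add_comm, ← Function.iterate_succ_apply' (dpDer (p ^ N)) i f,
      ← Function.iterate_succ_apply' (dpDer (p ^ N)) (j - i) g,
      show (j - i).succ = j + 1 - i by rw [mem_range] at hi; omega]

lemma dpAltSum_prime_pow_sub_one (hp : p.Prime) {N m : ℕ} {f g : ℕ → K}
    (hf : dpSupp (p ^ N) f) (hg : dpSupp (p ^ N) g) :
    dpAltSum (p ^ N) (p ^ m - 1) f g = (dpDer (p ^ N))^[p ^ m - 1] (dpMul (p ^ N) f g) := by
  rw [iterate_dpDer_dpMul hp hf hg, dpAltSum]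
  refine sum_congr rfl fun i hi => ?_
  rw [← Nat.cast_smul_eq_nsmul K,
    cast_choose_prime_pow_sub_one hp (by rw [mem_range] at hi; omega)]

lemma dpDer_dpAltSum (hp : p.Prime) {N : ℕ} {f g : ℕ → K}
    (hf : dpSupp (p ^ N) f) (hg : dpSupp (p ^ N) g) (k : ℕ) :
    dpDer (p ^ N) (dpAltSum (p ^ N) k f g)
      = dpAltSum (p ^ N) k (dpDer (p ^ N) f) g + dpAltSum (p ^ N) k f (dpDer (p ^ N) g) := by
  rw [dpAltSum, dpDer_sum, dpAltSum, dpAltSum, ← sum_add_distrib]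
  refine sum_congr rfl fun i _ => ?_
  rw [dpDer_smul, dpDer_dpMul hp (dpSupp_iterate_dpDer hf i) (dpSupp_iterate_dpDer hg (k - i)),
    smul_add, ← Function.iterate_succ_apply' (dpDer (p ^ N)) i f, Function.iterate_succ_apply,
    ← Function.iterate_succ_apply' (dpDer (p ^ N)) (k - i) g, Function.iterate_succ_apply]

lemma dpLie_one (hp : p.Prime) {N : ℕ} {h f : ℕ → K}
    (hh : dpSupp (p ^ N) h) (hf : dpSupp (p ^ N) f) :
    dpLie (p ^ N) 1 h f = dpDer (p ^ N) (dpMul (p ^ N) h f) := by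
  rw [dpLie, one_smul, dpDer_dpMul hp hh hf, dpMul_comm f, add_comm]

end CharP

end DividedPowers

theorem GzOdd_invariant_general {K : Type*} [Field K] (p m N : ℕ) (hp : p.Prime)
    (hodd : p ≠ 2) (hm : 1 ≤ m) [CharP K p] (k : ℕ) (hk : k = p ^ m - 2)
    (h f g : ℕ → K)
    (hh : dpSupp (p ^ N) h) (hf : dpSupp (p ^ N) f) (hg : dpSupp (p ^ N) g) :
    dpLie (p ^ N) ((k : K) + 2) h (GzOdd (p ^ N) k f g)
      = GzOdd (p ^ N) k (dpLie (p ^ N) 1 h f) g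
        + GzOdd (p ^ N) k f (dpLie (p ^ N) 1 h g) := by
  have hq : 1 < p ^ m := Nat.one_lt_pow (by omega) hp.one_lt
  have hk_odd : Odd k := hk ▸ Nat.Odd.sub_even hq (hp.odd_of_ne_two hodd).pow even_two
  have hweight : (k : K) + 2 = 0 := by
    rw [← Nat.cast_ofNat, ← Nat.cast_add, show k + 2 = p ^ m by omega, Nat.cast_pow,
      CharP.cast_eq_zero, zero_pow (by omega)]
  have hleibniz {u v : ℕ → K} (hu : dpSupp (p ^ N) u) (hv : dpSupp (p ^ N) v) :
      dpAltSum (p ^ N) (k + 1) u v = (dpDer (p ^ N))^[k + 1] (dpMul (p ^ N) u v) := by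
    rw [show k + 1 = p ^ m - 1 by omega]; exact dpAltSum_prime_pow_sub_one hp hu hv
  rw [hweight, dpLie, zero_smul, add_zero, dpLie_one hp hh hf, dpLie_one hp hh hg,
    GzOdd_eq_dpAltSum hk_odd, GzOdd_eq_dpAltSum hk_odd, GzOdd_eq_dpAltSum hk_odd,
    dpDer_dpAltSum hp hf hg]
  calc dpMul (p ^ N) h (dpAltSum (p ^ N) k (dpDer (p ^ N) f) g
        + dpAltSum (p ^ N) k f (dpDer (p ^ N) g))
      = dpMul (p ^ N) h (dpMul (p ^ N) f ((dpDer (p ^ N))^[k + 1] g)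
          - dpMul (p ^ N) ((dpDer (p ^ N))^[k + 1] f) g) := by
        rw [dpAltSum_dpDer_add_dpAltSum_dpDer hk_odd, sub_self, add_zero]
    _ = dpMul (p ^ N) (dpMul (p ^ N) h f) ((dpDer (p ^ N))^[k + 1] g)
          - dpMul (p ^ N) ((dpDer (p ^ N))^[k + 1] f) (dpMul (p ^ N) h g) := by
        rw [dpMul_sub_right, ← dpMul_assoc h f, dpMul_left_comm h]
    _ = dpAltSum (p ^ N) k (dpDer (p ^ N) (dpMul (p ^ N) h f)) g
          + dpAltSum (p ^ N) k f (dpDer (p ^ N) (dpMul (p ^ N) h g)) := by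
        rw [dpAltSum_dpDer_add_dpAltSum_dpDer hk_odd, hleibniz (dpSupp_dpMul h f) hg,
          hleibniz hf (dpSupp_dpMul h g), dpMul_assoc h f g, dpMul_left_comm h f g, sub_self,
          add_zero]

/-- Gz : F_1 ⊗ F_1 → F_{k+2} is vect(1;N)-invariant, k = p^m - 2, p odd. -/
theorem GzOdd_invariant {K : Type*} [Field K] (p m N : ℕ) (hp : p.Prime)
    (hodd : p ≠ 2) (hm : 1 ≤ m) [CharP K p] (k : ℕ) (hk : k = p ^ m - 2)
    (hkN : k < p ^ N) (h f g : ℕ → K)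
    (hh : dpSupp (p ^ N) h) (hf : dpSupp (p ^ N) f) (hg : dpSupp (p ^ N) g) :
    dpLie (p ^ N) ((k : K) + 2) h (GzOdd (p ^ N) k f g)
      = GzOdd (p ^ N) k (dpLie (p ^ N) 1 h f) g
        + GzOdd (p ^ N) k f (dpLie (p ^ N) 1 h g) :=
  GzOdd_invariant_general p m N hp hodd hm k hk h f g hh hf hg
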